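/- arXiv:1808.02726 — 7 statements merged into one kernel-verified Lean document; each statement's English description precedes it below -/
import Mathlib

section
/- In the random directed graph on ℤ where each pair (i,j) with i < j is independently an edge with probability p, vertex 0 connects (via a directed path) to every vertex in {1,…,n} if and only if g_j ≤ j for all j = 1,…,n, where g_j is the distance from j to the nearest i < j with (i,j) an edge. -/
/-!
A path from `a` only moves to the right, so if `a < j` reaches `j` its last edge starts at some
`i ≥ a`, and minimality of `g j` gives `g j ≤ j - i ≤ j - a`. Conversely, if `g j ≤ j - a` for
all `a < j ≤ n`, then the first-left edge of each such `j` starts in `[a, j)`, and induction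
on `j` builds a path from `a`.
-/

theorem Relation.ReflTransGen.le_of_forall_le {α : Type*} [Preorder α] {r : α → α → Prop}
    (hr : ∀ a b, r a b → a ≤ b) {a b : α} (hab : Relation.ReflTransGen r a b) : a ≤ b := by
  induction hab with
  | refl => exact le_rfl
  | tail _ hbc ih => exact ih.trans (hr _ _ hbc)

section FirstLeftEdge

variable {edge : ℤ → ℤ → Prop} {g : ℤ → ℤ}

theorem le_sub_of_reflTransGen (hedge : ∀ i j, edge i j → i < j) {j : ℤ}
    (hmin : ∀ k : ℤ, 1 ≤ k → k < g j → ¬ edge (j - k) j)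
    {a : ℤ} (hpath : Relation.ReflTransGen edge a j) (haj : a < j) : g j ≤ j - a := by
  obtain rfl | ⟨i, hai, hij⟩ := hpath.cases_tail
  · exact absurd haj (lt_irrefl _)
  have hai : a ≤ i := hai.le_of_forall_le fun _ _ h ↦ (hedge _ _ h).le
  have hij' := hedge _ _ hij
  have : g j ≤ j - i := not_lt.mp fun hlt ↦ hmin (j - i) (by omega) hlt (by simpa using hij)
  omega

theorem reflTransGen_of_le_sub (hedge : ∀ j, edge (j - g j) j) (hpos : ∀ j, 1 ≤ g j)
    {a n : ℤ} (hle : ∀ j, a < j → j ≤ n → g j ≤ j - a) :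
    ∀ i, a ≤ i → i ≤ n → Relation.ReflTransGen edge a i := by
  suffices ∀ m, a ≤ m → ∀ i, a ≤ i → i ≤ m → i ≤ n → Relation.ReflTransGen edge a i from
    fun i hai ↦ this i hai i hai le_rfl
  intro m ham
  induction m, ham using Int.leInduction with
  | base => intro i hai hia _; obtain rfl : i = a := le_antisymm hia hai; rfl
  | succ m _ ih =>
    intro i hai him hin
    rcases (show i ≤ m ∨ i = m + 1 by omega) with him | rfl
    · exact ih i hai him hin
    · have := hle (m + 1) (by omega) hin
      have := hpos (m + 1)
      exact (ih _ (by omega) (by omega) (by omega)).tail (hedge (m + 1))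

end FirstLeftEdge

/-- Pathwise equivalence in the Barak–Erdős graph: vertex `0` connects (via a directed
path) to every vertex in `{1,…,n}` iff `g_j ≤ j` for all `j = 1,…,n`, where `g_j ≥ 1` is
the distance from `j` to the nearest `i < j` with `(i,j)` an edge. -/
theorem stmt2 (edge : ℤ → ℤ → Prop) (hedge : ∀ i j, edge i j → i < j)
    (g : ℤ → ℤ)
    (hg : ∀ j : ℤ, 1 ≤ g j ∧ edge (j - g j) j ∧
      ∀ k : ℤ, 1 ≤ k → k < g j → ¬ edge (j - k) j)
    (n : ℤ) :
    (∀ i : ℤ, 1 ≤ i → i ≤ n → Relation.ReflTransGen edge 0 i) ↔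
      (∀ j : ℤ, 1 ≤ j → j ≤ n → g j ≤ j) := by
  constructor
  · intro hreach j hj hjn
    simpa using le_sub_of_reflTransGen hedge (hg j).2.2 (hreach j hj hjn) hj
  · intro hle i hi hin
    refine reflTransGen_of_le_sub (fun j ↦ (hg j).2.1) (fun j ↦ (hg j).1) ?_ i (by omega) hin
    intro j hj hjn
    simpa using hle j hj hjn
end

section
/- The probability that vertex 0 in SOG(ℤ,p) connects to every vertex to its right equals ∏_{k=1}^∞ (1 - (1-p)^k), and the probability that 0 is a skeleton point (connects to every j > 0 and is reachable from every k < 0) equals (∏_{k=1}^∞ (1 - (1-p)^k))², which is strictly positive for 0 < p ≤ 1. -/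
/-!
Vertex `0` reaches every `j > 0` iff every `j > 0` receives an edge from `{0, …, j - 1}`. These
events are determined by disjoint sets of edges, hence independent, and the one for `j` has
probability `1 - (1 - p) ^ j`; continuity from above turns the finite products into the infinite
one, which is positive because `∑ log (1 - (1 - p) ^ k)` converges. The reflection `i ↦ -i` turns
left connectivity into right connectivity of a graph with the same law, and the two events are
independent because they depend on edges with nonnegative source, resp. nonpositive target.
-/

open MeasureTheory ProbabilityTheory Function

section InfiniteProduct

variable {r : ℝ}

lemma summable_log_one_sub_pow_succ (h0 : 0 ≤ r) (h1 : r < 1) :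
    Summable fun k : ℕ => Real.log (1 - r ^ (k + 1)) := by
  simpa only [pow_succ', sub_eq_add_neg] using Real.summable_log_one_add_of_summable
    ((summable_geometric_of_lt_one h0 h1).mul_left r).neg

lemma one_sub_pow_succ_pos (h0 : 0 ≤ r) (h1 : r < 1) (k : ℕ) : 0 < 1 - r ^ (k + 1) :=
  sub_pos.mpr (pow_lt_one₀ h0 h1 k.succ_ne_zero)

lemma multipliable_one_sub_pow_succ (h0 : 0 ≤ r) (h1 : r < 1) :
    Multipliable fun k : ℕ => 1 - r ^ (k + 1) :=
  Real.multipliable_of_summable_log (one_sub_pow_succ_pos h0 h1)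
    (summable_log_one_sub_pow_succ h0 h1)

lemma tprod_one_sub_pow_succ_pos (h0 : 0 ≤ r) (h1 : r < 1) :
    0 < ∏' k : ℕ, (1 - r ^ (k + 1)) := by
  rw [← Real.rexp_tsum_eq_tprod (one_sub_pow_succ_pos h0 h1)
    (summable_log_one_sub_pow_succ h0 h1)]
  exact Real.exp_pos _

end InfiniteProduct

lemma ENNReal.ofReal_tprod_of_nonneg {ι : Type*} {f : ι → ℝ} (hf : ∀ i, 0 ≤ f i)
    (hm : Multipliable f) : ENNReal.ofReal (∏' i, f i) = ∏' i, ENNReal.ofReal (f i) := by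
  refine (HasProd.tprod_eq ?_).symm
  exact ((ENNReal.continuous_ofReal.tendsto _).comp hm.hasProd).congr
    fun s => ENNReal.ofReal_prod_of_nonneg fun i _ => hf i

section BlockIndependence

variable {Ω ι κ : Type*} {mΩ : MeasurableSpace Ω} {μ : Measure Ω} [IsProbabilityMeasure μ]
  {m : ι → MeasurableSpace Ω} {S : κ → Set ι} {E : κ → Set Ω}

lemma measure_biInter_finset_of_iIndep_blocks (h_le : ∀ i, m i ≤ mΩ) (h_indep : iIndep m μ)
    (hS : Pairwise (Disjoint on S)) (T : Finset κ)
    (hE : ∀ k ∈ T, MeasurableSet[⨆ i ∈ S k, m i] (E k)) :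
    μ (⋂ k ∈ T, E k) = ∏ k ∈ T, μ (E k) := by
  classical
  induction T using Finset.induction with
  | empty => simp
  | insert a T haT ih =>
    have hdisj : Disjoint (S a) (⋃ k ∈ T, S k) :=
      Set.disjoint_iUnion₂_right.mpr fun k hk => hS fun h => haT (h ▸ hk)
    have hind := (Indep_iff _ _ μ).mp (indep_iSup_of_disjoint h_le h_indep hdisj)
    have hT : MeasurableSet[⨆ i ∈ ⋃ k ∈ T, S k, m i] (⋂ k ∈ T, E k) :=
      Finset.measurableSet_biInter T fun k hk =>
        (biSup_mono fun i hi => Set.mem_biUnion hk hi : ⨆ i ∈ S k, m i ≤ _) _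
          (hE k (Finset.mem_insert_of_mem hk))
    rw [Finset.set_biInter_insert, Finset.prod_insert haT,
      hind _ _ (hE a (Finset.mem_insert_self a T)) hT,
      ih fun k hk => hE k (Finset.mem_insert_of_mem hk)]

lemma measure_iInter_eq_tprod_of_iIndep_blocks {S : ℕ → Set ι} {E : ℕ → Set Ω}
    (h_le : ∀ i, m i ≤ mΩ) (h_indep : iIndep m μ)
    (hS : Pairwise (Disjoint on S)) (hE : ∀ k, MeasurableSet[⨆ i ∈ S k, m i] (E k)) :
    μ (⋂ k, E k) = ∏' k, μ (E k) := by
  have hE' (k : ℕ) : MeasurableSet (E k) := iSup₂_le (fun i _ => h_le i) _ (hE k)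
  have h_lim := tendsto_measure_iInter_atTop
    (fun n => (Finset.measurableSet_biInter (Finset.range n) fun k _ => hE' k).nullMeasurableSet)
    (fun n n' hnn' => Set.biInter_mono (fun k hk => Finset.range_mono hnn' hk) fun _ _ => le_rfl)
    ⟨0, measure_ne_top μ _⟩
  have h_prod := (ENNReal.multipliable_of_le_one fun k => prob_le_one (μ := μ) (s := E k)).hasProd
    |>.tendsto_prod_nat
  rw [show (⋂ n, ⋂ k ∈ Finset.range n, E k) = ⋂ k, E k by
    ext ω; simpa using ⟨fun h k => h (k + 1) k k.lt_succ_self, fun h _ k _ => h k⟩] at h_lim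
  refine tendsto_nhds_unique (h_lim.congr fun n => ?_) h_prod
  exact measure_biInter_finset_of_iIndep_blocks h_le h_indep hS _ fun k _ => hE k

end BlockIndependence

section Paths

variable {r : ℤ → ℤ → Prop}

lemma le_of_reflTransGen (hr : ∀ a b, r a b → a < b) {a b : ℤ}
    (h : Relation.ReflTransGen r a b) : a ≤ b := by
  induction h with
  | refl => exact le_rfl
  | tail _ hbc ih => exact ih.trans (hr _ _ hbc).le

lemma forall_reflTransGen_iff (hr : ∀ a b, r a b → a < b) (a : ℤ) :
    (∀ j, a < j → Relation.ReflTransGen r a j) ↔ ∀ j, a < j → ∃ i, a ≤ i ∧ i < j ∧ r i j := by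
  refine ⟨fun h j hj => ?_, fun h => ?_⟩
  · rcases (h j hj).cases_tail with rfl | ⟨i, hai, hij⟩
    · exact absurd hj (lt_irrefl _)
    · exact ⟨i, le_of_reflTransGen hr hai, hr i j hij, hij⟩
  · suffices ∀ n : ℕ, ∀ j, j - a ≤ n → a < j → Relation.ReflTransGen r a j from
      fun j => this _ j (Int.self_le_toNat _)
    intro n
    induction n with
    | zero => intro j hj haj; omega
    | succ n ih =>
      intro j hj haj
      obtain ⟨i, hai, hij, hr⟩ := h j haj
      rcases hai.eq_or_lt with rfl | hai
      · exact .single hr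
      · exact (ih i (by omega) hai).tail hr

lemma reflTransGen_neg_swap_iff {a b : ℤ} :
    Relation.ReflTransGen (fun a b => r (-b) (-a)) a b ↔ Relation.ReflTransGen r (-b) (-a) := by
  refine ⟨fun h => Relation.reflTransGen_swap.mp (h.lift Neg.neg fun _ _ h => h), fun h => ?_⟩
  simpa [onFun] using (Relation.reflTransGen_swap.mpr h).lift (p := fun a b => r (-b) (-a)) Neg.neg
    fun x y (h : r y x) => show r (- -y) (- -x) by simpa using h

end Paths

abbrev IntEdge : Type := {q : ℤ × ℤ // q.1 < q.2}

section Connectivity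

variable {Ω : Type*} (α : ℤ → ℤ → Ω → Bool)

def rightConnected : Set Ω :=
  {ω | ∀ j : ℤ, 0 < j → Relation.ReflTransGen (fun a b : ℤ => a < b ∧ α a b ω = true) 0 j}

def leftConnected : Set Ω :=
  {ω | ∀ k : ℤ, k < 0 → Relation.ReflTransGen (fun a b : ℤ => a < b ∧ α a b ω = true) k 0}

def edgeIntoSucc (k : ℕ) : Set Ω :=
  ⋃ i ∈ Finset.range (k + 1), {ω | α i (k + 1) ω = true}

lemma rightConnected_eq_iInter_edgeIntoSucc : rightConnected α = ⋂ k : ℕ, edgeIntoSucc α k := by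
  ext ω
  simp only [rightConnected, edgeIntoSucc, Set.mem_ofPred_eq,
    forall_reflTransGen_iff (r := fun a b : ℤ => a < b ∧ α a b ω = true) (fun _ _ h => h.1),
    Set.mem_iInter, Set.mem_iUnion, Finset.mem_range, exists_prop]
  constructor
  · intro h k
    obtain ⟨i, hi, hik, -, hα⟩ := h (k + 1) (by omega)
    lift i to ℕ using hi
    exact ⟨i, by omega, mod_cast hα⟩
  · intro h j hj
    obtain ⟨k, rfl⟩ := Int.eq_succ_of_zero_lt hj
    obtain ⟨i, hi, hα⟩ := h k
    exact ⟨i, by omega, by omega, by omega, mod_cast hα⟩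

lemma leftConnected_eq_rightConnected_neg :
    leftConnected α = rightConnected fun i j => α (-j) (-i) := by
  ext ω
  have h_neg (a b : ℤ) :=
    reflTransGen_neg_swap_iff (r := fun a b : ℤ => a < b ∧ α a b ω = true) (a := a) (b := b)
  simp only [neg_lt_neg_iff] at h_neg
  simp only [leftConnected, rightConnected, Set.mem_ofPred_eq, h_neg, neg_zero]
  exact ⟨fun h j hj => h (-j) (by omega), fun h k hk => by simpa using h (-k) (by omega)⟩

end Connectivity

section EdgeIndependence

variable {Ω : Type*} {mΩ : MeasurableSpace Ω} {μ : Measure Ω} {α : ℤ → ℤ → Ω → Bool} {p : ℝ}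

abbrev edgeMeasurableSpace (α : ℤ → ℤ → Ω → Bool) (q : IntEdge) : MeasurableSpace Ω :=
  MeasurableSpace.comap (α q.1.1 q.1.2) inferInstance

lemma edgeMeasurableSpace_le (hmeas : ∀ i j, Measurable (α i j)) (q : IntEdge) :
    edgeMeasurableSpace α q ≤ mΩ :=
  (hmeas _ _).comap_le

lemma iIndep_edgeMeasurableSpace (hindep : iIndepFun (fun q : IntEdge => α q.1.1 q.1.2) μ) :
    iIndep (edgeMeasurableSpace α) μ :=
  (iIndepFun_iff_iIndep _ _ _).mp hindep

lemma measurableSet_edge_of_mem {S : Set IntEdge} {a b : ℤ} (hab : a < b) (h : ⟨(a, b), hab⟩ ∈ S)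
    (c : Bool) : MeasurableSet[⨆ q ∈ S, edgeMeasurableSpace α q] {ω | α a b ω = c} :=
  le_iSup₂ (f := fun q _ => edgeMeasurableSpace α q) _ h _
    (comap_measurable (α a b) (measurableSet_singleton c))

lemma measurableSet_edgeIntoSucc {m : MeasurableSpace Ω} {k : ℕ}
    (h : ∀ i : ℕ, i ≤ k → MeasurableSet[m] {ω | α i (k + 1) ω = true}) :
    MeasurableSet[m] (edgeIntoSucc α k) :=
  Finset.measurableSet_biUnion _ fun i hi => h i (Nat.lt_succ_iff.mp (Finset.mem_range.mp hi))

lemma measurableSet_rightConnected {m : MeasurableSpace Ω}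
    (h : ∀ i k : ℕ, i ≤ k → MeasurableSet[m] {ω | α i (k + 1) ω = true}) :
    MeasurableSet[m] (rightConnected α) := by
  rw [rightConnected_eq_iInter_edgeIntoSucc]
  exact .iInter fun k => measurableSet_edgeIntoSucc (h · k)

lemma iIndepFun_neg_swap (hindep : iIndepFun (fun q : IntEdge => α q.1.1 q.1.2) μ) :
    iIndepFun (fun q : IntEdge => α (-q.1.2) (-q.1.1)) μ :=
  hindep.precomp (g := fun q : IntEdge => (⟨(-q.1.2, -q.1.1), neg_lt_neg q.2⟩ : IntEdge))
    fun q q' h => by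
      simp only [Subtype.mk.injEq, Prod.mk.injEq, neg_inj] at h
      exact Subtype.ext (Prod.ext h.2 h.1)

lemma measure_rightConnected_inter_leftConnected (hmeas : ∀ i j, Measurable (α i j))
    (hindep : iIndepFun (fun q : IntEdge => α q.1.1 q.1.2) μ) :
    μ (rightConnected α ∩ leftConnected α) = μ (rightConnected α) * μ (leftConnected α) := by
  have h_disj : Disjoint {q : IntEdge | 0 ≤ q.1.1} {q : IntEdge | q.1.2 ≤ 0} :=
    Set.disjoint_left.mpr fun q (h : 0 ≤ q.1.1) (h' : q.1.2 ≤ 0) => by have := q.2; omega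
  refine (Indep_iff _ _ μ).mp (indep_iSup_of_disjoint (edgeMeasurableSpace_le hmeas)
    (iIndep_edgeMeasurableSpace hindep) h_disj) _ _ ?_ ?_
  · exact measurableSet_rightConnected fun i k _ =>
      measurableSet_edge_of_mem (by omega) (Int.natCast_nonneg i) true
  · rw [leftConnected_eq_rightConnected_neg]
    exact measurableSet_rightConnected fun i k _ =>
      measurableSet_edge_of_mem (a := -(k + 1)) (b := -i) (by omega) (by simp) true

variable [IsProbabilityMeasure μ]

lemma measure_edge_eq_false (hmeas : ∀ i j, Measurable (α i j))
    (hbern : ∀ i j, i < j → μ {ω | α i j ω = true} = ENNReal.ofReal p) (hp0 : 0 ≤ p)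
    {a b : ℤ} (hab : a < b) : μ {ω | α a b ω = false} = ENNReal.ofReal (1 - p) := by
  have h_compl : {ω | α a b ω = false} = {ω | α a b ω = true}ᶜ := by ext; simp
  rw [h_compl, prob_compl_eq_one_sub (s := {ω | α a b ω = true})
    (hmeas a b (measurableSet_singleton true)), hbern a b hab,
    ENNReal.ofReal_sub _ hp0, ENNReal.ofReal_one]

lemma measure_edgeIntoSucc (hmeas : ∀ i j, Measurable (α i j))
    (hindep : iIndepFun (fun q : IntEdge => α q.1.1 q.1.2) μ)
    (hbern : ∀ i j, i < j → μ {ω | α i j ω = true} = ENNReal.ofReal p) (hp0 : 0 ≤ p) (hp1 : p ≤ 1)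
    (k : ℕ) : μ (edgeIntoSucc α k) = ENNReal.ofReal (1 - (1 - p) ^ (k + 1)) := by
  have h_compl : (edgeIntoSucc α k)ᶜ = ⋂ i ∈ Finset.range (k + 1), {ω | α i (k + 1) ω = false} := by
    ext ω
    simp [edgeIntoSucc]
  have h_none : μ (edgeIntoSucc α k)ᶜ = ENNReal.ofReal ((1 - p) ^ (k + 1)) := by
    rw [h_compl, measure_biInter_finset_of_iIndep_blocks (edgeMeasurableSpace_le hmeas)
      (iIndep_edgeMeasurableSpace hindep)
      (S := fun i : ℕ => {q : IntEdge | q.1 = ((i : ℤ), (k : ℤ) + 1)}) ?_ _ ?_]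
    · rw [Finset.prod_congr rfl fun i hi => measure_edge_eq_false hmeas hbern hp0
        (by simp at hi; omega), Finset.prod_const, Finset.card_range,
        ENNReal.ofReal_pow (by linarith)]
    · intro i i' hii'
      refine Set.disjoint_left.mpr fun q hq hq' => hii' ?_
      simp only [Set.mem_ofPred_eq] at hq hq'
      have := congrArg Prod.fst (hq.symm.trans hq')
      omega
    · intro i hi
      have hik : (i : ℤ) < k + 1 := by simp at hi; omega
      exact measurableSet_edge_of_mem (S := {q : IntEdge | q.1 = ((i : ℤ), (k : ℤ) + 1)}) hik rfl
        false
  have h_meas : MeasurableSet (edgeIntoSucc α k) :=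
    measurableSet_edgeIntoSucc fun i _ => hmeas _ _ (measurableSet_singleton true)
  rw [← compl_compl (edgeIntoSucc α k), prob_compl_eq_one_sub h_meas.compl, h_none,
    ENNReal.ofReal_sub _ (pow_nonneg (by linarith) _), ENNReal.ofReal_one]

lemma measure_rightConnected (hmeas : ∀ i j, Measurable (α i j))
    (hindep : iIndepFun (fun q : IntEdge => α q.1.1 q.1.2) μ)
    (hbern : ∀ i j, i < j → μ {ω | α i j ω = true} = ENNReal.ofReal p) (hp0 : 0 < p) (hp1 : p ≤ 1) :
    μ (rightConnected α) = ENNReal.ofReal (∏' k : ℕ, (1 - (1 - p) ^ (k + 1))) := by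
  have h0 : 0 ≤ 1 - p := by linarith
  have h1 : 1 - p < 1 := by linarith
  rw [rightConnected_eq_iInter_edgeIntoSucc, measure_iInter_eq_tprod_of_iIndep_blocks
      (edgeMeasurableSpace_le hmeas) (iIndep_edgeMeasurableSpace hindep)
      (S := fun k : ℕ => {q : IntEdge | q.1.2 = k + 1}) ?_ ?_,
    ENNReal.ofReal_tprod_of_nonneg (fun k => (one_sub_pow_succ_pos h0 h1 k).le)
      (multipliable_one_sub_pow_succ h0 h1)]
  · exact tprod_congr fun k => measure_edgeIntoSucc hmeas hindep hbern hp0.le hp1 k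
  · intro k k' hkk'
    refine Set.disjoint_left.mpr fun q hq hq' => hkk' ?_
    simp only [Set.mem_ofPred_eq] at hq hq'
    omega
  · exact fun k => measurableSet_edgeIntoSucc fun i hik =>
      measurableSet_edge_of_mem (S := {q : IntEdge | q.1.2 = k + 1}) (by omega) rfl true

lemma measure_leftConnected (hmeas : ∀ i j, Measurable (α i j))
    (hindep : iIndepFun (fun q : IntEdge => α q.1.1 q.1.2) μ)
    (hbern : ∀ i j, i < j → μ {ω | α i j ω = true} = ENNReal.ofReal p) (hp0 : 0 < p) (hp1 : p ≤ 1) :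
    μ (leftConnected α) = ENNReal.ofReal (∏' k : ℕ, (1 - (1 - p) ^ (k + 1))) := by
  rw [leftConnected_eq_rightConnected_neg]
  exact measure_rightConnected (fun _ _ => hmeas _ _) (iIndepFun_neg_swap hindep)
    (fun _ _ hij => hbern _ _ (neg_lt_neg hij)) hp0 hp1

end EdgeIndependence

/-- In `SOG(ℤ,p)` with i.i.d. Bernoulli(p) edge indicators, the probability that vertex `0`
connects to every vertex to its right equals `∏_{k=1}^∞ (1-(1-p)^k)`, the probability
that `0` is a skeleton point equals the square of this product, and the product is
strictly positive for `0 < p ≤ 1`. -/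
theorem stmt3 {Ω : Type*} [MeasurableSpace Ω] (μ : Measure Ω) [IsProbabilityMeasure μ]
    (p : ℝ) (hp0 : 0 < p) (hp1 : p ≤ 1)
    (α : ℤ → ℤ → Ω → Bool)
    (hmeas : ∀ i j : ℤ, Measurable (α i j))
    (hindep : iIndepFun
      (fun q : {q : ℤ × ℤ // q.1 < q.2} => α q.1.1 q.1.2) μ)
    (hbern : ∀ i j : ℤ, i < j → μ {ω | α i j ω = true} = ENNReal.ofReal p) :
    (μ {ω | ∀ j : ℤ, 0 < j →
        Relation.ReflTransGen (fun a b : ℤ => a < b ∧ α a b ω = true) 0 j}).toReal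
      = (∏' k : ℕ, (1 - (1 - p) ^ (k + 1)))
    ∧ (μ {ω | (∀ j : ℤ, 0 < j →
          Relation.ReflTransGen (fun a b : ℤ => a < b ∧ α a b ω = true) 0 j) ∧
        (∀ k : ℤ, k < 0 →
          Relation.ReflTransGen (fun a b : ℤ => a < b ∧ α a b ω = true) k 0)}).toReal
      = (∏' k : ℕ, (1 - (1 - p) ^ (k + 1))) ^ 2
    ∧ 0 < ∏' k : ℕ, (1 - (1 - p) ^ (k + 1)) := by
  change (μ (rightConnected α)).toReal = _
    ∧ (μ (rightConnected α ∩ leftConnected α)).toReal = _ ∧ _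
  have h_pos := tprod_one_sub_pow_succ_pos (r := 1 - p) (by linarith) (by linarith)
  have h_right := measure_rightConnected hmeas hindep hbern hp0 hp1
  have h_left := measure_leftConnected hmeas hindep hbern hp0 hp1
  refine ⟨?_, ?_, h_pos⟩
  · rw [h_right, ENNReal.toReal_ofReal h_pos.le]
  · rw [measure_rightConnected_inter_leftConnected hmeas hindep, h_right, h_left,
      ← ENNReal.ofReal_mul h_pos.le, ENNReal.toReal_ofReal (by positivity), sq]
end

section
/- If a vertex i is a skeleton point of SOG(ℤ,p) and x < i < y, then the maximum path length from x to y splits: L_{x,y} = L_{x,i} + L_{i,y}, where L_{a,b} denotes the maximum number of edges over directed paths from a to b. -/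
/-! Edges go rightwards, so a path from `a` to `b` has at most `b - a` edges and every `maxLen`
below is attained. A longest path from `x` to `y` either visits `i`, and splits there, or jumps
over `i` along an edge `c → d` with `c < i < d`; replacing that edge by paths `c ⇝ i ⇝ d`, each
with at least one edge, gives paths `x ⇝ i` and `i ⇝ y` whose lengths add up to more. Conversely
a longest path to `i` followed by a longest path from `i` is a path from `x` to `y`. -/

/-- The maximal number of edges over directed paths from `a` to `b`:
`sSup` of the set of `m` such that there is a path (list of vertices) with `m` edges
from `a` to `b`. -/
noncomputable def maxLen (edge : ℤ → ℤ → Prop) (a b : ℤ) : ℕ :=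
  sSup {m : ℕ | ∃ l : List ℤ, l.Chain' edge ∧ l.head? = some a ∧
    l.getLast? = some b ∧ l.length = m + 1}

def HasPathOfLength (edge : ℤ → ℤ → Prop) (a b : ℤ) (m : ℕ) : Prop :=
  ∃ l : List ℤ, l.IsChain edge ∧ l.head? = some a ∧ l.getLast? = some b ∧ l.length = m + 1

def IsSkeletonPoint (edge : ℤ → ℤ → Prop) (i : ℤ) : Prop :=
  (∀ j, i < j → Relation.ReflTransGen edge i j) ∧ (∀ k, k < i → Relation.ReflTransGen edge k i)

namespace HasPathOfLength

variable {edge : ℤ → ℤ → Prop} {a b c : ℤ} {m n : ℕ}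

theorem refl (a : ℤ) : HasPathOfLength edge a a 0 :=
  ⟨[a], List.isChain_singleton a, rfl, rfl, rfl⟩

theorem cons (hac : edge a c) (h : HasPathOfLength edge c b m) :
    HasPathOfLength edge a b (m + 1) := by
  obtain ⟨_ | ⟨c', t⟩, hchain, hhead, hlast, hlen⟩ := h
  · simp at hhead
  · obtain rfl : c = c' := by simpa using hhead.symm
    exact ⟨a :: c :: t, hchain.cons_cons hac, rfl, by simpa using hlast, by simp [← hlen]⟩

theorem cases_head (h : HasPathOfLength edge a b m) :
    (m = 0 ∧ a = b) ∨ ∃ c k, m = k + 1 ∧ edge a c ∧ HasPathOfLength edge c b k := by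
  obtain ⟨_ | ⟨a', t⟩, hchain, hhead, hlast, hlen⟩ := h
  · simp at hhead
  obtain rfl : a = a' := by simpa using hhead.symm
  rcases t with _ | ⟨c, t⟩
  · left
    simp_all
  · right
    obtain ⟨hac, hchain⟩ := List.isChain_cons_cons.mp hchain
    refine ⟨c, t.length, by simpa using hlen.symm, hac, c :: t, hchain, rfl, ?_, rfl⟩
    simpa using hlast

theorem eq_of_length_zero (h : HasPathOfLength edge a b 0) : a = b := by
  rcases h.cases_head with ⟨-, rfl⟩ | ⟨_, _, hm, -⟩
  · rfl
  · omega

theorem append (hab : HasPathOfLength edge a b m) (hbc : HasPathOfLength edge b c n) :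
    HasPathOfLength edge a c (m + n) := by
  induction m generalizing a with
  | zero => obtain rfl := hab.eq_of_length_zero; simpa using hbc
  | succ k ih =>
    rcases hab.cases_head with ⟨hm, -⟩ | ⟨d, k', hm, had, hdb⟩
    · omega
    · obtain rfl : k = k' := by omega
      simpa [Nat.add_right_comm] using (ih hdb).cons had

theorem exists_of_reflTransGen (h : Relation.ReflTransGen edge a b) :
    ∃ m, HasPathOfLength edge a b m := by
  induction h using Relation.ReflTransGen.head_induction_on with
  | refl => exact ⟨0, refl b⟩
  | head hac _ ih => obtain ⟨m, h⟩ := ih; exact ⟨m + 1, h.cons hac⟩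

theorem exists_pos_of_reflTransGen (h : Relation.ReflTransGen edge a b) (hab : a ≠ b) :
    ∃ m, 0 < m ∧ HasPathOfLength edge a b m := by
  obtain ⟨m, h⟩ := exists_of_reflTransGen h
  refine ⟨m, Nat.pos_of_ne_zero fun hm => hab ?_, h⟩
  subst hm
  exact h.eq_of_length_zero

theorem add_le (hedge : ∀ u v, edge u v → u < v) (h : HasPathOfLength edge a b m) :
    a + m ≤ b := by
  induction m generalizing a with
  | zero => simp [h.eq_of_length_zero]
  | succ k ih =>
    rcases h.cases_head with ⟨hm, -⟩ | ⟨c, k', hm, hac, hcb⟩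
    · omega
    · obtain rfl : k = k' := by omega
      have := hedge a c hac
      have := ih hcb
      push_cast
      omega

theorem bddAbove (hedge : ∀ u v, edge u v → u < v) (a b : ℤ) :
    BddAbove {m | HasPathOfLength edge a b m} :=
  ⟨(b - a).toNat, fun m h => by have := h.add_le hedge; omega⟩

theorem exists_split_of_isSkeletonPoint {i : ℤ} (hi : IsSkeletonPoint edge i)
    (h : HasPathOfLength edge a b m) (hai : a < i) (hib : i < b) :
    ∃ m₁ m₂, HasPathOfLength edge a i m₁ ∧ HasPathOfLength edge i b m₂ ∧ m ≤ m₁ + m₂ := by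
  induction m generalizing a with
  | zero => have := h.eq_of_length_zero; omega
  | succ k ih =>
    rcases h.cases_head with ⟨hm, -⟩ | ⟨c, k', hm, hac, hcb⟩
    · omega
    obtain rfl : k = k' := by omega
    rcases lt_trichotomy c i with hci | rfl | hic
    · obtain ⟨m₁, m₂, h₁, h₂, hle⟩ := ih hcb hci
      exact ⟨m₁ + 1, m₂, h₁.cons hac, h₂, by omega⟩
    · exact ⟨1, k, (refl c).cons hac, hcb, by omega⟩
    · obtain ⟨m₁, hm₁, h₁⟩ := exists_pos_of_reflTransGen (hi.2 a hai) hai.ne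
      obtain ⟨n, hn, hic'⟩ := exists_pos_of_reflTransGen (hi.1 c hic) hic.ne
      exact ⟨m₁, n + k, h₁, hic'.append hcb, by omega⟩

end HasPathOfLength

section maxLen

variable {edge : ℤ → ℤ → Prop} {a b : ℤ} {m : ℕ}

theorem le_maxLen (hedge : ∀ u v, edge u v → u < v) (h : HasPathOfLength edge a b m) :
    m ≤ maxLen edge a b :=
  le_csSup (HasPathOfLength.bddAbove hedge a b) h

theorem hasPathOfLength_maxLen (hedge : ∀ u v, edge u v → u < v)
    (h : HasPathOfLength edge a b m) : HasPathOfLength edge a b (maxLen edge a b) :=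
  Nat.sSup_mem ⟨m, h⟩ (HasPathOfLength.bddAbove hedge a b)

end maxLen

/-- If `i` is a skeleton point of a directed graph on `ℤ` (edges only from smaller to
larger integers): `i` connects to every `j > i` and every `k < i` connects to `i`, then
for `x < i < y` the maximal path length splits: `L_{x,y} = L_{x,i} + L_{i,y}`. -/
theorem stmt5 (edge : ℤ → ℤ → Prop) (hedge : ∀ i j, edge i j → i < j) (i : ℤ)
    (hright : ∀ j : ℤ, i < j → Relation.ReflTransGen edge i j)
    (hleft : ∀ k : ℤ, k < i → Relation.ReflTransGen edge k i)
    (x y : ℤ) (hx : x < i) (hy : i < y) :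
    maxLen edge x y = maxLen edge x i + maxLen edge i y := by
  obtain ⟨_, hxi⟩ := HasPathOfLength.exists_of_reflTransGen (hleft x hx)
  obtain ⟨_, hiy⟩ := HasPathOfLength.exists_of_reflTransGen (hright y hy)
  have hxy := (hasPathOfLength_maxLen hedge hxi).append (hasPathOfLength_maxLen hedge hiy)
  obtain ⟨m₁, m₂, h₁, h₂, hle⟩ :=
    (hasPathOfLength_maxLen hedge hxy).exists_split_of_isSkeletonPoint ⟨hright, hleft⟩ hx hy
  exact le_antisymm (hle.trans (add_le_add (le_maxLen hedge h₁) (le_maxLen hedge h₂)))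
    (le_maxLen hedge hxy)
end

section
/- In a directed graph on ℤ with edges only from smaller to larger integers and real edge weights w(a,b), suppose vertex i satisfies: (i) for every n ≥ 1 the maximal path weight from i to i+n exceeds cn, (ii) for every n ≥ 1 the maximal path weight from i-n to i exceeds cn, and (iii) every edge (a,b) with a < i < b has weight w(a,b) < c(b-a). Then for all x < i < y, the maximal path weight from x to y equals the maximal path weight from x to i plus the maximal path weight from i to y. -/
/-- The maximal weight over directed paths from `a` to `b` in a weighted directed graph
on `ℤ`; the weight of a path is the sum of its edge weights. -/
noncomputable def maxWt (edge : ℤ → ℤ → Prop) (w : ℤ → ℤ → ℝ) (a b : ℤ) : ℝ :=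
  sSup {s : ℝ | ∃ l : List ℤ, l.Chain' edge ∧ l.head? = some a ∧ l.getLast? = some b ∧
    s = ((l.zip l.tail).map fun q => w q.1 q.2).sum}

/-!
Cut a path from `x` to `y` at its edge `(a, b)` with `a ≤ i < b`. If `a < i`, then
by (ii) and (i) there are paths `a → i` and `i → b` of weights above `c (i - a)` and
`c (b - i)`, whose sum beats `w a b` by (iii); so replacing the edge by this detour through `i`
does not lose weight, and every path from `x` to `y` weighs at most
`maxWt x i + maxWt i y`. The reverse inequality is concatenation at `i`.
-/

open scoped Pointwise

lemma Real.bddAbove_of_nonneg_lt_sSup {S : Set ℝ} {t : ℝ} (ht : 0 ≤ t) (h : t < sSup S) :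
    BddAbove S := by
  by_contra hS
  rw [Real.sSup_of_not_bddAbove hS] at h
  linarith

lemma Real.exists_lt_of_nonneg_lt_sSup {S : Set ℝ} {t : ℝ} (ht : 0 ≤ t) (h : t < sSup S) :
    ∃ s ∈ S, t < s := by
  by_contra! hS
  exact h.not_ge (Real.sSup_le hS ht)

section PathWeights

variable {edge : ℤ → ℤ → Prop} {w : ℤ → ℤ → ℝ}

def pathWt (w : ℤ → ℤ → ℝ) (l : List ℤ) : ℝ := ((l.zip l.tail).map fun q => w q.1 q.2).sum

def pathWts (edge : ℤ → ℤ → Prop) (w : ℤ → ℤ → ℝ) (a b : ℤ) : Set ℝ :=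
  {s | ∃ l : List ℤ, l.IsChain edge ∧ l.head? = some a ∧ l.getLast? = some b ∧ s = pathWt w l}

lemma maxWt_eq_sSup_pathWts (a b : ℤ) : maxWt edge w a b = sSup (pathWts edge w a b) := rfl

lemma pathWt_cons_cons (a b : ℤ) (l : List ℤ) :
    pathWt w (a :: b :: l) = w a b + pathWt w (b :: l) := by
  simp [pathWt]

lemma zero_mem_pathWts (a : ℤ) : (0 : ℝ) ∈ pathWts edge w a a :=
  ⟨[a], List.isChain_singleton a, rfl, rfl, by simp [pathWt]⟩

lemma add_mem_pathWts_of_edge {a m b : ℤ} {s : ℝ} (h : edge a m)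
    (hs : s ∈ pathWts edge w m b) : w a m + s ∈ pathWts edge w a b := by
  obtain ⟨l, hl, hlm, hlb, rfl⟩ := hs
  obtain ⟨l, rfl⟩ : ∃ l', l = m :: l' := List.head?_eq_some_iff.mp hlm
  exact ⟨a :: m :: l, List.isChain_cons_cons.mpr ⟨h, hl⟩, rfl, by simpa using hlb,
    (pathWt_cons_cons a m l).symm⟩

lemma edge_mem_pathWts {a b : ℤ} (h : edge a b) : w a b ∈ pathWts edge w a b := by
  simpa using add_mem_pathWts_of_edge h (zero_mem_pathWts b)

lemma add_mem_pathWts {a m b : ℤ} {s t : ℝ} (hs : s ∈ pathWts edge w a m)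
    (ht : t ∈ pathWts edge w m b) : s + t ∈ pathWts edge w a b := by
  obtain ⟨l, hl, hla, hlm, rfl⟩ := hs
  induction l generalizing a with
  | nil => simp at hla
  | cons z l ih =>
    obtain rfl : z = a := by simpa using hla
    cases l with
    | nil =>
      obtain rfl : z = m := by simpa using hlm
      simpa [pathWt] using ht
    | cons z' l =>
      rw [pathWt_cons_cons, add_assoc]
      exact add_mem_pathWts_of_edge hl.rel (ih hl.tail rfl (by simpa using hlm))

lemma pathWts_add_subset (a m b : ℤ) :
    pathWts edge w a m + pathWts edge w m b ⊆ pathWts edge w a b :=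
  Set.add_subset_iff.mpr fun _ hs _ ht => add_mem_pathWts hs ht

lemma exists_crossing_edge {i x y : ℤ} {s : ℝ} (hs : s ∈ pathWts edge w x y) (hx : x ≤ i)
    (hy : i < y) : ∃ a b, a ≤ i ∧ i < b ∧ edge a b ∧
      ∃ s₁ ∈ pathWts edge w x a, ∃ s₂ ∈ pathWts edge w b y, s = s₁ + w a b + s₂ := by
  obtain ⟨l, hl, hlx, hly, rfl⟩ := hs
  induction l generalizing x with
  | nil => simp at hlx
  | cons z l ih =>
    obtain rfl : z = x := by simpa using hlx
    cases l with
    | nil =>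
      obtain rfl : z = y := by simpa using hly
      omega
    | cons b l =>
      have hb : pathWt w (b :: l) ∈ pathWts edge w b y :=
        ⟨_, hl.tail, rfl, by simpa using hly, rfl⟩
      rw [pathWt_cons_cons]
      rcases le_or_gt b i with hbi | hib
      · obtain ⟨a', b', ha', hb', hab', s₁, hs₁, s₂, hs₂, hsum⟩ :=
          ih hbi hl.tail rfl (by simpa using hly)
        exact ⟨a', b', ha', hb', hab', _, add_mem_pathWts_of_edge hl.rel hs₁, s₂, hs₂,
          by rw [hsum]; ring⟩
      · exact ⟨z, b, hx, hib, hl.rel, 0, zero_mem_pathWts z, _, hb, by ring⟩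

end PathWeights

section Splitting

variable {edge : ℤ → ℤ → Prop} {w : ℤ → ℤ → ℝ} {i : ℤ}

lemma maxWt_eq_add_of_detour
    (hdetour : ∀ a b, edge a b → a ≤ i → i < b →
      ∃ t₁ ∈ pathWts edge w a i, ∃ t₂ ∈ pathWts edge w i b, w a b ≤ t₁ + t₂)
    {x y : ℤ} (hx : x ≤ i) (hy : i < y)
    (hne₁ : (pathWts edge w x i).Nonempty) (hbdd₁ : BddAbove (pathWts edge w x i))
    (hne₂ : (pathWts edge w i y).Nonempty) (hbdd₂ : BddAbove (pathWts edge w i y)) :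
    maxWt edge w x y = maxWt edge w x i + maxWt edge w i y := by
  simp only [maxWt_eq_sSup_pathWts]
  have upper : ∀ s ∈ pathWts edge w x y,
      s ≤ sSup (pathWts edge w x i) + sSup (pathWts edge w i y) := by
    intro s hs
    obtain ⟨a, b, ha, hb, hab, s₁, hs₁, s₂, hs₂, rfl⟩ := exists_crossing_edge hs hx hy
    obtain ⟨t₁, ht₁, t₂, ht₂, hle⟩ := hdetour a b hab ha hb
    have := le_csSup hbdd₁ (add_mem_pathWts hs₁ ht₁)
    have := le_csSup hbdd₂ (add_mem_pathWts ht₂ hs₂)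
    linarith
  have hsub := pathWts_add_subset (edge := edge) (w := w) x i y
  refine le_antisymm (csSup_le ((hne₁.add hne₂).mono hsub) upper) ?_
  rw [← csSup_add hne₁ hbdd₁ hne₂ hbdd₂]
  exact csSup_le_csSup ⟨_, upper⟩ (hne₁.add hne₂) hsub

variable {c : ℝ}

lemma lt_maxWt_of_forall_lt_maxWt_sub
    (h : ∀ n : ℤ, 1 ≤ n → c * n < maxWt edge w (i - n) i) {a : ℤ} (ha : a < i) :
    c * ((i : ℝ) - a) < maxWt edge w a i := by
  have := h (i - a) (by omega)
  rwa [sub_sub_cancel, Int.cast_sub] at this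

lemma lt_maxWt_of_forall_lt_maxWt_add
    (h : ∀ n : ℤ, 1 ≤ n → c * n < maxWt edge w i (i + n)) {b : ℤ} (hb : i < b) :
    c * ((b : ℝ) - i) < maxWt edge w i b := by
  have := h (b - i) (by omega)
  rwa [add_sub_cancel, Int.cast_sub] at this

lemma exists_detour (hc : 0 < c)
    (h1 : ∀ n : ℤ, 1 ≤ n → c * n < maxWt edge w i (i + n))
    (h2 : ∀ n : ℤ, 1 ≤ n → c * n < maxWt edge w (i - n) i)
    (h3 : ∀ a b : ℤ, edge a b → a < i → i < b → w a b < c * (b - a))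
    {a b : ℤ} (hab : edge a b) (ha : a ≤ i) (hb : i < b) :
    ∃ t₁ ∈ pathWts edge w a i, ∃ t₂ ∈ pathWts edge w i b, w a b ≤ t₁ + t₂ := by
  rcases ha.eq_or_lt with rfl | ha
  · exact ⟨0, zero_mem_pathWts a, _, edge_mem_pathWts hab, by simp⟩
  have hai : (0 : ℝ) < i - a := sub_pos.mpr (Int.cast_lt.mpr ha)
  have hbi : (0 : ℝ) < b - i := sub_pos.mpr (Int.cast_lt.mpr hb)
  obtain ⟨t₁, ht₁, hlt₁⟩ :=
    Real.exists_lt_of_nonneg_lt_sSup (by positivity) (lt_maxWt_of_forall_lt_maxWt_sub h2 ha)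
  obtain ⟨t₂, ht₂, hlt₂⟩ :=
    Real.exists_lt_of_nonneg_lt_sSup (by positivity) (lt_maxWt_of_forall_lt_maxWt_add h1 hb)
  refine ⟨t₁, ht₁, t₂, ht₂, le_of_lt ?_⟩
  calc w a b < c * ((b : ℝ) - a) := h3 a b hab ha hb
    _ = c * ((i : ℝ) - a) + c * ((b : ℝ) - i) := by ring
    _ < t₁ + t₂ := add_lt_add hlt₁ hlt₂

end Splitting

theorem stmt6_general (edge : ℤ → ℤ → Prop)
    (w : ℤ → ℤ → ℝ) (c : ℝ) (hc : 0 < c) (i : ℤ)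
    (h1 : ∀ n : ℤ, 1 ≤ n → c * n < maxWt edge w i (i + n))
    (h2 : ∀ n : ℤ, 1 ≤ n → c * n < maxWt edge w (i - n) i)
    (h3 : ∀ a b : ℤ, edge a b → a < i → i < b → w a b < c * (b - a))
    (x y : ℤ) (hx : x < i) (hy : i < y) :
    maxWt edge w x y = maxWt edge w x i + maxWt edge w i y := by
  have hxi : 0 ≤ c * ((i : ℝ) - x) := mul_nonneg hc.le (sub_nonneg.mpr (Int.cast_le.mpr hx.le))
  have hiy : 0 ≤ c * ((y : ℝ) - i) := mul_nonneg hc.le (sub_nonneg.mpr (Int.cast_le.mpr hy.le))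
  have hlt₁ := lt_maxWt_of_forall_lt_maxWt_sub h2 hx
  have hlt₂ := lt_maxWt_of_forall_lt_maxWt_add h1 hy
  obtain ⟨_, hs₁, -⟩ := Real.exists_lt_of_nonneg_lt_sSup hxi hlt₁
  obtain ⟨_, hs₂, -⟩ := Real.exists_lt_of_nonneg_lt_sSup hiy hlt₂
  exact maxWt_eq_add_of_detour (fun _ _ hab ha hb => exists_detour hc h1 h2 h3 hab ha hb)
    hx.le hy ⟨_, hs₁⟩ (Real.bddAbove_of_nonneg_lt_sSup hxi hlt₁)
    ⟨_, hs₂⟩ (Real.bddAbove_of_nonneg_lt_sSup hiy hlt₂)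

/-- If (i) every maximal path weight from `i` to `i+n` exceeds `cn`, (ii) every maximal
path weight from `i-n` to `i` exceeds `cn`, and (iii) every edge `(a,b)` with `a < i < b`
has weight `< c(b-a)`, then for all `x < i < y` the maximal path weight from `x` to `y`
splits additively at `i`. -/
theorem stmt6 (edge : ℤ → ℤ → Prop) (hedge : ∀ a b, edge a b → a < b)
    (w : ℤ → ℤ → ℝ) (c : ℝ) (hc : 0 < c) (i : ℤ)
    (h1 : ∀ n : ℤ, 1 ≤ n → c * n < maxWt edge w i (i + n))
    (h2 : ∀ n : ℤ, 1 ≤ n → c * n < maxWt edge w (i - n) i)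
    (h3 : ∀ a b : ℤ, edge a b → a < i → i < b → w a b < c * (b - a))
    (x y : ℤ) (hx : x < i) (hy : i < y) :
    maxWt edge w x y = maxWt edge w x i + maxWt edge w i y :=
  stmt6_general edge w c hc i h1 h2 h3 x y hx hy
end

section
/- Let (W̃_{i,j})_{i<j} be defined by W̃_{i,j} = max over x,y with i ≤ x < y ≤ j of W_{x,y}, where W_{x,y} is the maximal weight of a path from x to y in a weighted directed graph on ℤ with nonnegative vertex weights v_i and edge weights u_{i,j}. Then the subadditivity-type inequality holds: W̃_{i,k} ≤ W̃_{i,j} + W̃_{j,k} + max_{i ≤ x ≤ j ≤ y ≤ k} (v_x + u_{x,y})⁺ for all i < j < k. -/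
/-- `W_{x,y}`: the positive part of the maximal weight of a directed path from `x` to `y`,
where the weight of a path `(i_0,…,i_ℓ)` is `∑_{r=1}^ℓ (v_{i_{r-1}} + u_{i_{r-1},i_r})`. -/
noncomputable def Wmax (edge : ℤ → ℤ → Prop) (u : ℤ → ℤ → ℝ) (v : ℤ → ℝ) (x y : ℤ) : ℝ :=
  max 0 (sSup {s : ℝ | ∃ l : List ℤ, l.Chain' edge ∧ l.head? = some x ∧
    l.getLast? = some y ∧ 2 ≤ l.length ∧
    s = ((l.zip l.tail).map fun q => v q.1 + u q.1 q.2).sum})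

/-- `W̃_{i,j} = max_{i ≤ x < y ≤ j} W_{x,y}`. -/
noncomputable def Wtil (edge : ℤ → ℤ → Prop) (u : ℤ → ℤ → ℝ) (v : ℤ → ℝ) (i j : ℤ) : ℝ :=
  sSup {s : ℝ | ∃ x y : ℤ, i ≤ x ∧ x < y ∧ y ≤ j ∧ s = Wmax edge u v x y}

/-!
A path from `x` to `y` with `i ≤ x < y ≤ k` either lies in `[i, j]`, or lies in `[j, k]`, or has an
edge `(a, b)` with `a < j ≤ b`. Cutting that edge splits its weight into the weight of a path inside
`[i, j]`, which is at most `W̃_{i,j}`, the term `v_a + u_{a,b}`, and the weight of a path inside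
`[j, k]`, which is at most `W̃_{j,k}`; a piece that is a single vertex weighs `0 ≤ W̃`.
-/

namespace List

variable {α : Type*}

theorem exists_adjacent_crossing (p : α → Prop) :
    ∀ {l : List α} {x y : α}, l.head? = some x → l.getLast? = some y → p x → ¬ p y →
      ∃ s a b t, l = s ++ a :: b :: t ∧ p a ∧ ¬ p b
  | [], _, _, hx, _, _, _ => by simp at hx
  | [c], x, y, hx, hy, hpx, hpy => by simp_all
  | c :: d :: t, x, y, hx, hy, hpx, hpy => by
    obtain rfl : c = x := by simpa using hx
    by_cases hpd : p d
    · obtain ⟨s, a, b, t', hdt, hpa, hpb⟩ :=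
        exists_adjacent_crossing p (l := d :: t) rfl (by simpa using hy) hpd hpy
      exact ⟨c :: s, a, b, t', by rw [hdt, cons_append], hpa, hpb⟩
    · exact ⟨[], c, d, t, rfl, hpx, hpd⟩

theorem IsChain.mem_Icc [Preorder α] {r : α → α → Prop} (hr : ∀ a b, r a b → a ≤ b)
    {l : List α} (hl : l.IsChain r) {x y a : α} (hx : l.head? = some x)
    (hy : l.getLast? = some y) (ha : a ∈ l) : a ∈ Set.Icc x y :=
  ⟨hl.induction (x ≤ ·) l (fun _ _ hab h => h.trans (hr _ _ hab))
      (fun hne => by simp [(head_eq_iff_head?_eq_some hne).2 hx]) a ha,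
    hl.backwards_induction (· ≤ y) l (fun _ _ hab h => (hr _ _ hab).trans h)
      (fun hne => by simp [(getLast_eq_iff_getLast?_eq_some hne).2 hy]) a ha⟩

end List

section PathWeight

variable {α : Type*} (w : α → α → ℝ)

noncomputable def pathWeight (l : List α) : ℝ :=
  ((l.zip l.tail).map fun q => w q.1 q.2).sum

@[simp]
theorem pathWeight_singleton (a : α) : pathWeight w [a] = 0 := by
  simp [pathWeight]

@[simp]
theorem pathWeight_cons_cons (a b : α) (l : List α) :
    pathWeight w (a :: b :: l) = w a b + pathWeight w (b :: l) := by
  simp [pathWeight]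

theorem pathWeight_append_cons_cons (s : List α) (a b : α) (t : List α) :
    pathWeight w (s ++ a :: b :: t) =
      pathWeight w (s ++ [a]) + w a b + pathWeight w (b :: t) := by
  induction s with
  | nil => simp
  | cons c s ih =>
    cases s with
    | nil => simp [add_assoc]
    | cons d s => simp only [List.cons_append, pathWeight_cons_cons] at ih ⊢; rw [ih]; ring

theorem pathWeight_le_sum_max_zero [DecidableEq α] {l : List α} (hl : l.Nodup) {S : Finset α}
    (hS : ∀ a ∈ l, a ∈ S) : pathWeight w l ≤ ∑ q ∈ S ×ˢ S, max 0 (w q.1 q.2) := by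
  have hnodup : (l.zip l.tail).Nodup :=
    List.Nodup.of_map Prod.snd <| by
      rw [List.map_snd_zip (by simp)]; exact hl.sublist (List.tail_sublist l)
  have hsub : (l.zip l.tail).toFinset ⊆ S ×ˢ S := fun q hq => by
    obtain ⟨h1, h2⟩ := List.of_mem_zip (List.mem_toFinset.1 hq)
    exact Finset.mem_product.2 ⟨hS _ h1, hS _ (List.mem_of_mem_tail h2)⟩
  calc pathWeight w l = ∑ q ∈ (l.zip l.tail).toFinset, w q.1 q.2 :=
        (List.sum_toFinset _ hnodup).symm
    _ ≤ ∑ q ∈ (l.zip l.tail).toFinset, max 0 (w q.1 q.2) :=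
        Finset.sum_le_sum fun q _ => le_max_right _ _
    _ ≤ ∑ q ∈ S ×ˢ S, max 0 (w q.1 q.2) :=
        Finset.sum_le_sum_of_subset_of_nonneg hsub fun q _ _ => le_max_left _ _

end PathWeight

section MaximalWeights

variable {edge : ℤ → ℤ → Prop} {u : ℤ → ℤ → ℝ} {v : ℤ → ℝ}

theorem bddAbove_pathWeights (hedge : ∀ a b, edge a b → a < b) (x y : ℤ) :
    BddAbove {s : ℝ | ∃ l : List ℤ, l.IsChain edge ∧ l.head? = some x ∧
      l.getLast? = some y ∧ 2 ≤ l.length ∧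
      s = pathWeight (fun a b => v a + u a b) l} := by
  refine ⟨∑ q ∈ Finset.Icc x y ×ˢ Finset.Icc x y, max 0 (v q.1 + u q.1 q.2), ?_⟩
  rintro _ ⟨l, hl, hx, hy, -, rfl⟩
  refine pathWeight_le_sum_max_zero _ (hl.imp hedge |>.pairwise).nodup fun a ha => ?_
  exact Finset.mem_Icc.2 (hl.mem_Icc (fun a b h => (hedge a b h).le) hx hy ha)

theorem pathWeight_le_Wmax (hedge : ∀ a b, edge a b → a < b) {l : List ℤ} {x y : ℤ}
    (hl : l.IsChain edge) (hx : l.head? = some x) (hy : l.getLast? = some y)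
    (hlen : 2 ≤ l.length) : pathWeight (fun a b => v a + u a b) l ≤ Wmax edge u v x y :=
  (le_csSup (bddAbove_pathWeights hedge x y) ⟨l, hl, hx, hy, hlen, rfl⟩).trans (le_max_right _ _)

theorem Wmax_le {x y : ℤ} {c : ℝ} (hc : 0 ≤ c)
    (h : ∀ l : List ℤ, l.IsChain edge → l.head? = some x → l.getLast? = some y →
      2 ≤ l.length → pathWeight (fun a b => v a + u a b) l ≤ c) :
    Wmax edge u v x y ≤ c :=
  max_le hc <| Real.sSup_le (by rintro _ ⟨l, hl, hx, hy, hlen, rfl⟩; exact h l hl hx hy hlen) hc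

theorem Wtil_nonneg (i j : ℤ) : 0 ≤ Wtil edge u v i j :=
  Real.sSup_nonneg <| by rintro _ ⟨x, y, -, -, -, rfl⟩; exact le_max_left _ _

theorem Wmax_le_Wtil {i j x y : ℤ} (hix : i ≤ x) (hxy : x < y) (hyj : y ≤ j) :
    Wmax edge u v x y ≤ Wtil edge u v i j := by
  have hbdd : BddAbove (Set.image2 (Wmax edge u v) (Set.Icc i j) (Set.Icc i j)) :=
    ((Set.finite_Icc i j).image2 _ (Set.finite_Icc i j)).bddAbove
  refine le_csSup (hbdd.mono ?_) ⟨x, y, hix, hxy, hyj, rfl⟩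
  rintro _ ⟨x, y, hix, hxy, hyj, rfl⟩
  exact Set.mem_image2_of_mem ⟨hix, by omega⟩ ⟨by omega, hyj⟩

theorem Wtil_le {i j : ℤ} {c : ℝ} (hc : 0 ≤ c)
    (h : ∀ x y, i ≤ x → x < y → y ≤ j → Wmax edge u v x y ≤ c) : Wtil edge u v i j ≤ c :=
  Real.sSup_le (by rintro _ ⟨x, y, hix, hxy, hyj, rfl⟩; exact h x y hix hxy hyj) hc

theorem pathWeight_le_Wtil (hedge : ∀ a b, edge a b → a < b) {l : List ℤ} {i j x y : ℤ}
    (hl : l.IsChain edge) (hx : l.head? = some x) (hy : l.getLast? = some y)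
    (hix : i ≤ x) (hyj : y ≤ j) : pathWeight (fun a b => v a + u a b) l ≤ Wtil edge u v i j := by
  match l, hl, hx, hy with
  | [_], _, _, _ => simpa using Wtil_nonneg i j
  | c :: d :: t, hl, hx, hy =>
    obtain rfl : c = x := by simpa using hx
    have hdy : d ≤ y := (hl.tail.mem_Icc (fun a b h => (hedge a b h).le) rfl
      (by simpa using hy) List.mem_cons_self).2
    have hxy : c < y := (hedge c d (List.rel_of_isChain_cons_cons hl)).trans_le hdy
    exact (pathWeight_le_Wmax hedge hl hx hy (by simp)).trans (Wmax_le_Wtil hix hxy hyj)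

theorem pathWeight_le_Wtil_add_Wtil_add (hedge : ∀ a b, edge a b → a < b)
    {i j k : ℤ} {B : ℝ} (hB0 : 0 ≤ B)
    (hB : ∀ x y, i ≤ x → x ≤ j → j ≤ y → y ≤ k → v x + u x y ≤ B)
    {l : List ℤ} {x y : ℤ} (hl : l.IsChain edge) (hx : l.head? = some x)
    (hy : l.getLast? = some y) (hix : i ≤ x) (hyk : y ≤ k) :
    pathWeight (fun a b => v a + u a b) l ≤ Wtil edge u v i j + Wtil edge u v j k + B := by
  have hij : 0 ≤ Wtil edge u v i j := Wtil_nonneg i j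
  have hjk : 0 ≤ Wtil edge u v j k := Wtil_nonneg j k
  rcases le_or_gt y j with hyj | hjy
  · exact (pathWeight_le_Wtil hedge hl hx hy hix hyj).trans (by linarith)
  rcases le_or_gt j x with hjx | hxj
  · exact (pathWeight_le_Wtil hedge hl hx hy hjx hyk).trans (by linarith)
  obtain ⟨s, a, b, t, rfl, haj, hjb⟩ :=
    List.exists_adjacent_crossing (· < j) hx hy hxj hjy.not_gt
  replace hjb : j ≤ b := not_lt.1 hjb
  have hle : ∀ a b, edge a b → a ≤ b := fun a b h => (hedge a b h).le
  have hxa : x ≤ a := (hl.mem_Icc hle hx hy (by simp)).1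
  have hby : b ≤ y := (hl.mem_Icc hle hx hy (by simp)).2
  have hsplit : s ++ a :: b :: t = (s ++ [a]) ++ b :: t := by simp
  rw [hsplit] at hl hx hy
  obtain ⟨hl₁, hl₂, -⟩ := List.isChain_append.1 hl
  rw [List.head?_append_of_ne_nil _ (by simp)] at hx
  rw [List.getLast?_append_of_ne_nil _ (by simp)] at hy
  have h₁ : pathWeight (fun a b => v a + u a b) (s ++ [a]) ≤ Wtil edge u v i j :=
    pathWeight_le_Wtil hedge hl₁ hx (by simp) hix haj.le
  have h₂ : pathWeight (fun a b => v a + u a b) (b :: t) ≤ Wtil edge u v j k :=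
    pathWeight_le_Wtil hedge hl₂ rfl hy hjb hyk
  rw [pathWeight_append_cons_cons]
  linarith [hB a b (hix.trans hxa) haj.le hjb (hby.trans hyk)]

end MaximalWeights

theorem stmt7_general (edge : ℤ → ℤ → Prop) (hedge : ∀ a b, edge a b → a < b)
    (u : ℤ → ℤ → ℝ) (v : ℤ → ℝ)
    (i j k : ℤ) :
    Wtil edge u v i k ≤ Wtil edge u v i j + Wtil edge u v j k +
      sSup {t : ℝ | ∃ x y : ℤ, i ≤ x ∧ x ≤ j ∧ j ≤ y ∧ y ≤ k ∧
        t = max 0 (v x + u x y)} := by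
  set S := {t : ℝ | ∃ x y : ℤ, i ≤ x ∧ x ≤ j ∧ j ≤ y ∧ y ≤ k ∧ t = max 0 (v x + u x y)}
  have hS0 : 0 ≤ sSup S := Real.sSup_nonneg <| by
    rintro _ ⟨x, y, -, -, -, -, rfl⟩; exact le_max_left _ _
  have hS : ∀ x y, i ≤ x → x ≤ j → j ≤ y → y ≤ k → v x + u x y ≤ sSup S := by
    have hbdd :
        BddAbove (Set.image2 (fun x y => max 0 (v x + u x y)) (Set.Icc i j) (Set.Icc j k)) :=
      ((Set.finite_Icc i j).image2 _ (Set.finite_Icc j k)).bddAbove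
    refine fun x y hix hxj hjy hyk => (le_max_right 0 _).trans (le_csSup (hbdd.mono ?_)
      ⟨x, y, hix, hxj, hjy, hyk, rfl⟩)
    rintro _ ⟨x, y, hix, hxj, hjy, hyk, rfl⟩
    exact Set.mem_image2_of_mem ⟨hix, hxj⟩ ⟨hjy, hyk⟩
  have hRHS : 0 ≤ Wtil edge u v i j + Wtil edge u v j k + sSup S := by
    have := Wtil_nonneg (edge := edge) (u := u) (v := v)
    linarith [this i j, this j k]
  exact Wtil_le hRHS fun x y hix _ hyk => Wmax_le hRHS fun l hl hx hy _ =>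
    pathWeight_le_Wtil_add_Wtil_add hedge hS0 hS hl hx hy hix hyk

/-- The subadditivity-type inequality
`W̃_{i,k} ≤ W̃_{i,j} + W̃_{j,k} + max_{i ≤ x ≤ j ≤ y ≤ k} (v_x + u_{x,y})⁺`,
holding pathwise for nonnegative vertex weights. -/
theorem stmt7 (edge : ℤ → ℤ → Prop) (hedge : ∀ a b, edge a b → a < b)
    (u : ℤ → ℤ → ℝ) (v : ℤ → ℝ) (hv : ∀ x, 0 ≤ v x)
    (i j k : ℤ) (hij : i < j) (hjk : j < k) :
    Wtil edge u v i k ≤ Wtil edge u v i j + Wtil edge u v j k +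
      sSup {t : ℝ | ∃ x y : ℤ, i ≤ x ∧ x ≤ j ∧ j ≤ y ∧ y ≤ k ∧
        t = max 0 (v x + u x y)} :=
  stmt7_general edge hedge u v i j k
end

section
/- Let F⁺ and F⁻ be independent σ-algebras, G⁺ ⊆ F⁺ and G⁻ ⊆ F⁻ sub-σ-algebras, and G a σ-algebra independent of F⁺ ∨ F⁻. Then F⁺ and F⁻ are conditionally independent given G⁻ ∨ G⁺ ∨ G. -/
/-!
For `s ∈ G⁺` and `t ∈ G⁻`, independence of `F⁺` and `F⁻` splits `∫_{s ∩ t} f g` into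
`∫_s f · ∫_t g = ∫_s E[f|G⁺] · ∫_t E[g|G⁻]`, and splitting back shows that `E[f|G⁺] E[g|G⁻]` has
the same integrals as `f g` over the π-system of such intersections, which generates `G⁺ ∨ G⁻`.
Hence `E[f g | G⁺ ∨ G⁻] = E[f|G⁺] E[g|G⁻]`. The same identity, applied to `f g` and the constant `1`
for the pair `F⁺ ∨ F⁻`, `G`, shows that adjoining `G` does not change this conditional expectation.
Taking `g = 1` or `f = 1` identifies `E[1_A|H]` with `E[1_A|G⁺]` and `E[1_B|H]` with `E[1_B|G⁻]`.
-/

open MeasureTheory ProbabilityTheory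

open MeasurableSpace Set in
theorem MeasurableSpace.sup_eq_generateFrom_image2_inter {Ω : Type*} (m₁ m₂ : MeasurableSpace Ω) :
    m₁ ⊔ m₂ =
      generateFrom (image2 (· ∩ ·) {s | MeasurableSet[m₁] s} {t | MeasurableSet[m₂] t}) := by
  refine le_antisymm (sup_le ?_ ?_) (generateFrom_le ?_)
  · exact fun s hs => measurableSet_generateFrom ⟨s, hs, univ, .univ, inter_univ s⟩
  · exact fun t ht => measurableSet_generateFrom ⟨univ, .univ, t, ht, univ_inter t⟩
  · rintro _ ⟨s, hs, t, ht, rfl⟩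
    exact (le_sup_left (b := m₂) s hs).inter (le_sup_right (a := m₁) t ht)

theorem IsPiSystem.image2_inter {Ω : Type*} {C D : Set (Set Ω)} (hC : IsPiSystem C)
    (hD : IsPiSystem D) : IsPiSystem (Set.image2 (· ∩ ·) C D) := by
  rintro _ ⟨s₁, hs₁, t₁, ht₁, rfl⟩ _ ⟨s₂, hs₂, t₂, ht₂, rfl⟩ hne
  rw [Set.inter_inter_inter_comm] at hne ⊢
  exact ⟨_, hC _ hs₁ _ hs₂ hne.left, _, hD _ ht₁ _ ht₂ hne.right, rfl⟩

theorem ProbabilityTheory.Indep.indepFun_of_measurable {Ω β γ : Type*}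
    {m₁ m₂ m0 : MeasurableSpace Ω} [MeasurableSpace β] [MeasurableSpace γ] {μ : Measure Ω} (h : Indep m₁ m₂ μ)
    {f : Ω → β} {g : Ω → γ} (hf : Measurable[m₁] f) (hg : Measurable[m₂] g) : IndepFun f g μ := by
  rw [IndepFun_iff_Indep]
  exact indep_of_indep_of_le_right (indep_of_indep_of_le_left h hf.comap_le) hg.comap_le

section CondExp

variable {Ω E : Type*} {m m0 : MeasurableSpace Ω} {μ : Measure Ω}
  [NormedAddCommGroup E] [NormedSpace ℝ E] [CompleteSpace E]

theorem MeasureTheory.ae_eq_condExp_of_forall_setIntegral_eq_of_isPiSystem [IsFiniteMeasure μ]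
    (hm : m ≤ m0) {C : Set (Set Ω)} (hgen : m = MeasurableSpace.generateFrom C)
    (hC : IsPiSystem C) {f g : Ω → E} (hf : Integrable f μ) (hg : Integrable g μ)
    (hgm : AEStronglyMeasurable[m] g μ) (huniv : ∫ x, g x ∂μ = ∫ x, f x ∂μ)
    (hg_eq : ∀ s ∈ C, ∫ x in s, g x ∂μ = ∫ x in s, f x ∂μ) : g =ᵐ[μ] μ[f | m] := by
  suffices h : ∀ s, MeasurableSet[m] s → ∫ x in s, g x ∂μ = ∫ x in s, f x ∂μ from
    ae_eq_condExp_of_forall_setIntegral_eq hm hf (fun _ _ _ => hg.integrableOn)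
      (fun s hs _ => h s hs) hgm
  intro s hs
  induction s, hs using MeasurableSpace.induction_on_inter hgen hC with
  | empty => simp
  | basic s hs => exact hg_eq s hs
  | compl s hs ih => rw [setIntegral_compl (hm s hs) hg, setIntegral_compl (hm s hs) hf, huniv, ih]
  | iUnion s hdisj hs ih =>
    rw [integral_iUnion (fun i => hm _ (hs i)) hdisj hg.integrableOn,
      integral_iUnion (fun i => hm _ (hs i)) hdisj hf.integrableOn]
    exact tsum_congr ih

end CondExp

namespace ProbabilityTheory

variable {Ω : Type*} {m₁ m₂ n₁ n₂ m0 : MeasurableSpace Ω} {μ : Measure Ω}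

theorem Indep.setIntegral_inter_mul (hind : Indep m₁ m₂ μ) (hm₁ : m₁ ≤ m0) (hm₂ : m₂ ≤ m0)
    {s t : Set Ω} (hs : MeasurableSet[m₁] s) (ht : MeasurableSet[m₂] t) {f g : Ω → ℝ}
    (hf : StronglyMeasurable[m₁] f) (hg : StronglyMeasurable[m₂] g) :
    ∫ x in s ∩ t, f x * g x ∂μ = (∫ x in s, f x ∂μ) * ∫ x in t, g x ∂μ := by
  have hfs : StronglyMeasurable[m₁] (s.indicator f) := hf.indicator hs
  have hgt : StronglyMeasurable[m₂] (t.indicator g) := hg.indicator ht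
  rw [← integral_indicator (hm₁ s hs), ← integral_indicator (hm₂ t ht),
    ← integral_indicator ((hm₁ s hs).inter (hm₂ t ht))]
  simp_rw [Set.inter_indicator_mul]
  exact (hind.indepFun_of_measurable hfs.measurable hgt.measurable).integral_mul_eq_mul_integral
    (hfs.mono hm₁).aestronglyMeasurable (hgt.mono hm₂).aestronglyMeasurable

variable [IsProbabilityMeasure μ]

theorem Indep.condExp_mul_sup (hind : Indep m₁ m₂ μ) (hm₁ : m₁ ≤ m0) (hm₂ : m₂ ≤ m0)
    (hn₁ : n₁ ≤ m₁) (hn₂ : n₂ ≤ m₂) {f g : Ω → ℝ}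
    (hf : StronglyMeasurable[m₁] f) (hg : StronglyMeasurable[m₂] g)
    (hfi : Integrable f μ) (hgi : Integrable g μ) :
    μ[f * g | n₁ ⊔ n₂] =ᵐ[μ] μ[f | n₁] * μ[g | n₂] := by
  have hfc : StronglyMeasurable[m₁] μ[f | n₁] := stronglyMeasurable_condExp.mono hn₁
  have hgc : StronglyMeasurable[m₂] μ[g | n₂] := stronglyMeasurable_condExp.mono hn₂
  have hinter : ∀ s t, MeasurableSet[n₁] s → MeasurableSet[n₂] t →
      ∫ x in s ∩ t, (μ[f | n₁] * μ[g | n₂]) x ∂μ = ∫ x in s ∩ t, (f * g) x ∂μ := fun s t hs ht => by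
    rw [Pi.mul_def, Pi.mul_def, hind.setIntegral_inter_mul hm₁ hm₂ (hn₁ s hs) (hn₂ t ht) hfc hgc,
      hind.setIntegral_inter_mul hm₁ hm₂ (hn₁ s hs) (hn₂ t ht) hf hg,
      setIntegral_condExp (hn₁.trans hm₁) hfi hs, setIntegral_condExp (hn₂.trans hm₂) hgi ht]
  refine Filter.EventuallyEq.symm <| ae_eq_condExp_of_forall_setIntegral_eq_of_isPiSystem
    (sup_le (hn₁.trans hm₁) (hn₂.trans hm₂)) (MeasurableSpace.sup_eq_generateFrom_image2_inter _ _)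
    ((@MeasurableSpace.isPiSystem_measurableSet _ n₁).image2_inter
      (@MeasurableSpace.isPiSystem_measurableSet _ n₂))
    ((hind.indepFun_of_measurable hf.measurable hg.measurable).integrable_mul hfi hgi)
    ((hind.indepFun_of_measurable hfc.measurable hgc.measurable).integrable_mul
      integrable_condExp integrable_condExp)
    ((stronglyMeasurable_condExp.mono le_sup_left).mul
      (stronglyMeasurable_condExp.mono le_sup_right)).aestronglyMeasurable
    (by simpa using hinter _ _ MeasurableSet.univ MeasurableSet.univ) ?_
  rintro _ ⟨s, hs, t, ht, rfl⟩
  exact hinter s t hs ht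

theorem condExp_mul_sup_sup_of_indep {Fp Fm Gp Gm G : MeasurableSpace Ω}
    (hFp : Fp ≤ m0) (hFm : Fm ≤ m0) (hG : G ≤ m0) (hGp : Gp ≤ Fp) (hGm : Gm ≤ Fm)
    (hind : Indep Fp Fm μ) (hindG : Indep (Fp ⊔ Fm) G μ) {f g : Ω → ℝ}
    (hf : StronglyMeasurable[Fp] f) (hg : StronglyMeasurable[Fm] g)
    (hfi : Integrable f μ) (hgi : Integrable g μ) :
    μ[f * g | Gm ⊔ Gp ⊔ G] =ᵐ[μ] μ[f | Gp] * μ[g | Gm] := by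
  have hfg : StronglyMeasurable[Fp ⊔ Fm] (f * g) :=
    (hf.mono le_sup_left).mul (hg.mono le_sup_right)
  have hfgi : Integrable (f * g) μ :=
    (hind.indepFun_of_measurable hf.measurable hg.measurable).integrable_mul hfi hgi
  calc μ[f * g | Gm ⊔ Gp ⊔ G] = μ[f * g * 1 | Gm ⊔ Gp ⊔ G] := by rw [mul_one]
    _ =ᵐ[μ] μ[f * g | Gm ⊔ Gp] * μ[1 | G] :=
      hindG.condExp_mul_sup (sup_le hFp hFm) hG
        (sup_comm Gm Gp ▸ sup_le_sup hGp hGm) le_rfl hfg stronglyMeasurable_const hfgi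
        (integrable_const 1)
    _ = μ[f * g | Gp ⊔ Gm] := by
      rw [show μ[(1 : Ω → ℝ) | G] = 1 from condExp_const hG 1, mul_one, sup_comm]
    _ =ᵐ[μ] μ[f | Gp] * μ[g | Gm] :=
      hind.condExp_mul_sup hFp hFm hGp hGm hf hg hfi hgi

end ProbabilityTheory

/-- If `F⁺` and `F⁻` are independent σ-algebras, `G⁺ ⊆ F⁺`, `G⁻ ⊆ F⁻`, and `G` is
independent of `F⁺ ⊔ F⁻`, then `F⁺` and `F⁻` are conditionally independent given
`G⁻ ⊔ G⁺ ⊔ G`: for `A ∈ F⁺`, `B ∈ F⁻`,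
`E[1_{A∩B} | G⁻ ⊔ G⁺ ⊔ G] = E[1_A | ·]·E[1_B | ·]` a.s. -/
theorem stmt16 {Ω : Type*} {m0 : MeasurableSpace Ω} (μ : Measure Ω)
    [IsProbabilityMeasure μ]
    (Fp Fm Gp Gm G : MeasurableSpace Ω)
    (hFp : Fp ≤ m0) (hFm : Fm ≤ m0) (hG : G ≤ m0)
    (hGp : Gp ≤ Fp) (hGm : Gm ≤ Fm)
    (hind : Indep Fp Fm μ)
    (hindG : Indep (Fp ⊔ Fm) G μ) :
    ∀ A B : Set Ω, MeasurableSet[Fp] A → MeasurableSet[Fm] B →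
      (μ[Set.indicator (A ∩ B) (fun _ => (1 : ℝ)) | Gm ⊔ Gp ⊔ G]) =ᵐ[μ]
        fun ω => (μ[Set.indicator A (fun _ => (1 : ℝ)) | Gm ⊔ Gp ⊔ G]) ω *
          (μ[Set.indicator B (fun _ => (1 : ℝ)) | Gm ⊔ Gp ⊔ G]) ω := by
  intro A B hA hB
  have key {f g : Ω → ℝ} :=
    condExp_mul_sup_sup_of_indep (f := f) (g := g) hFp hFm hG hGp hGm hind hindG
  have hχA : StronglyMeasurable[Fp] (A.indicator 1 : Ω → ℝ) := stronglyMeasurable_one.indicator hA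
  have hχB : StronglyMeasurable[Fm] (B.indicator 1 : Ω → ℝ) := stronglyMeasurable_one.indicator hB
  have hχAi : Integrable (A.indicator 1 : Ω → ℝ) μ := (integrable_const 1).indicator (hFp _ hA)
  have hχBi : Integrable (B.indicator 1 : Ω → ℝ) μ := (integrable_const 1).indicator (hFm _ hB)
  have hAB := key hχA hχB hχAi hχBi
  have hA1 := key hχA stronglyMeasurable_one hχAi (integrable_const 1)
  have h1B := key stronglyMeasurable_one hχB (integrable_const 1) hχBi
  have hone : ∀ m ≤ m0, μ[(1 : Ω → ℝ) | m] = 1 := fun m hm => condExp_const hm 1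
  rw [← Set.inter_indicator_one] at hAB
  rw [mul_one, hone Gm (hGm.trans hFm), mul_one] at hA1
  rw [one_mul, hone Gp (hGp.trans hFp), one_mul] at h1B
  filter_upwards [hAB, hA1, h1B] with ω hAB hA hB
  exact hAB.trans (congrArg₂ (· * ·) hA.symm hB.symm)
end

section
/- In the notation of the c-renewal points: with A₀ = ⋂_{m,n≥1} {Ŵ_{-m,0} ≥ cm, Ŵ_{0,n} ≥ cn, U_{-m,n} < c(m+n)} and, for k > 0, A_k and its truncation Ã_k = ⋂_{1≤m≤k, n≥1} {Ŵ_{k-m,k} ≥ cm, Ŵ_{k,k+n} ≥ cn, U_{k-m,k+n} < c(m+n)}, one has the set identity A₀ ∩ A_k = A₀ ∩ Ã_k. -/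
/-!
For `m ≤ k` the conditions of `A_k` and `Ã_k` coincide, so only `m > k` needs work. Then
`k - m < 0 < k`, and splitting at `0` gives `Ŵ_{k-m,k} ≥ Ŵ_{k-m,0} + Ŵ_{0,k} ≥ c(m-k) + ck = cm`,
while `U_{k-m,k+n} = U_{-(m-k),k+n} < c((m-k) + (k+n)) = c(m+n)` is one of the conditions of `A₀`.
-/

theorem mul_le_of_split_at_zero (What : ℤ → ℤ → ℝ) (c : ℝ) {k m : ℤ} (hk : 0 < k) (hkm : k < m)
    (hsplit : ∀ x y : ℤ, x < 0 → 0 < y → What x 0 + What 0 y ≤ What x y)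
    (hleft : ∀ m : ℤ, 1 ≤ m → c * m ≤ What (-m) 0)
    (hright : ∀ n : ℤ, 1 ≤ n → c * n ≤ What 0 n) :
    c * m ≤ What (k - m) k := by
  have hfirst : c * ((m - k : ℤ) : ℝ) ≤ What (k - m) 0 := by
    simpa only [neg_sub] using hleft (m - k) (by omega)
  calc c * m = c * ((m - k : ℤ) : ℝ) + c * k := by push_cast; ring
    _ ≤ What (k - m) 0 + What 0 k := add_le_add hfirst (hright k hk)
    _ ≤ What (k - m) k := hsplit (k - m) k (by omega) hk

theorem lt_of_edge_bound_at_zero (U : ℤ → ℤ → ℝ) (c : ℝ) {k m n : ℤ} (hk : 0 ≤ k) (hkm : k < m)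
    (hn : 1 ≤ n) (hedge : ∀ m n : ℤ, 1 ≤ m → 1 ≤ n → U (-m) n < c * (m + n)) :
    U (k - m) (k + n) < c * (m + n) := by
  have h := hedge (m - k) (k + n) (by omega) (by omega)
  rw [neg_sub] at h
  convert h using 2
  push_cast
  ring

theorem stmt17_general (What U : ℤ → ℤ → ℝ) (c : ℝ) (k : ℤ) (hk : 0 < k)
    (hsplit : ∀ x y : ℤ, x < 0 → 0 < y → What x 0 + What 0 y ≤ What x y) :
    -- A₀
    ((∀ m : ℤ, 1 ≤ m → c * m ≤ What (-m) 0) ∧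
     (∀ n : ℤ, 1 ≤ n → c * n ≤ What 0 n) ∧
     (∀ m n : ℤ, 1 ≤ m → 1 ≤ n → U (-m) n < c * (m + n))) →
    -- A₀ ∩ A_k = A₀ ∩ Ã_k, i.e. Ã_k ↔ A_k given A₀
    ((((∀ m : ℤ, 1 ≤ m → m ≤ k → c * m ≤ What (k - m) k) ∧
       (∀ n : ℤ, 1 ≤ n → c * n ≤ What k (k + n)) ∧
       (∀ m n : ℤ, 1 ≤ m → m ≤ k → 1 ≤ n → U (k - m) (k + n) < c * (m + n)))) ↔
     (((∀ m : ℤ, 1 ≤ m → c * m ≤ What (k - m) k) ∧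
       (∀ n : ℤ, 1 ≤ n → c * n ≤ What k (k + n)) ∧
       (∀ m n : ℤ, 1 ≤ m → 1 ≤ n → U (k - m) (k + n) < c * (m + n))))) := by
  rintro ⟨hleft, hright, hedge⟩
  constructor
  · rintro ⟨hpath, hforward, hedgeₖ⟩
    refine ⟨fun m hm => ?_, hforward, fun m n hm hn => ?_⟩
    · rcases le_or_gt m k with hmk | hkm
      · exact hpath m hm hmk
      · exact mul_le_of_split_at_zero What c hk hkm hsplit hleft hright
    · rcases le_or_gt m k with hmk | hkm
      · exact hedgeₖ m n hm hmk hn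
      · exact lt_of_edge_bound_at_zero U c hk.le hkm hn hedge
  · rintro ⟨hpath, hforward, hedgeₖ⟩
    exact ⟨fun m hm _ => hpath m hm, hforward, fun m n hm _ hn => hedgeₖ m n hm hn⟩

/-- Deterministic identity `A₀ ∩ A_k = A₀ ∩ Ã_k` for the c-renewal events. Here
`What a b` is the maximal weight of a directed path from `a` to `b` and `U i j` the
weight of the direct edge `(i,j)` (0 if absent); `hsplit` expresses the additivity
property `Ŵ_{x,y} ≥ Ŵ_{x,0} + Ŵ_{0,y}` for `x < 0 < y`, which holds on `A₀`. -/
theorem stmt17 (What U : ℤ → ℤ → ℝ) (c : ℝ) (hc : 0 < c) (k : ℤ) (hk : 0 < k)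
    (hsplit : ∀ x y : ℤ, x < 0 → 0 < y → What x 0 + What 0 y ≤ What x y) :
    -- A₀
    ((∀ m : ℤ, 1 ≤ m → c * m ≤ What (-m) 0) ∧
     (∀ n : ℤ, 1 ≤ n → c * n ≤ What 0 n) ∧
     (∀ m n : ℤ, 1 ≤ m → 1 ≤ n → U (-m) n < c * (m + n))) →
    -- A₀ ∩ A_k = A₀ ∩ Ã_k, i.e. Ã_k ↔ A_k given A₀
    ((((∀ m : ℤ, 1 ≤ m → m ≤ k → c * m ≤ What (k - m) k) ∧
       (∀ n : ℤ, 1 ≤ n → c * n ≤ What k (k + n)) ∧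
       (∀ m n : ℤ, 1 ≤ m → m ≤ k → 1 ≤ n → U (k - m) (k + n) < c * (m + n)))) ↔
     (((∀ m : ℤ, 1 ≤ m → c * m ≤ What (k - m) k) ∧
       (∀ n : ℤ, 1 ≤ n → c * n ≤ What k (k + n)) ∧
       (∀ m n : ℤ, 1 ≤ m → 1 ≤ n → U (k - m) (k + n) < c * (m + n))))) :=
  stmt17_general What U c k hk hsplit
end
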